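/- arXiv:1504.07379 — 5 statements merged into one kernel-verified Lean document; each statement's English description precedes it below -/
import Mathlib

section
/- A finite simple graph G is quasi-threshold (i.e., contains no induced P4 and no induced C4) if and only if there exists a rooted forest on the vertex set of G such that two distinct vertices are adjacent in G exactly when one is a strict ancestor of the other in the forest. -/
/-- Vertices `a b c d` form an induced path `a – b – c – d` on four vertices. -/
def IsInducedP4 {W : Type*} (G : SimpleGraph W) (a b c d : W) : Prop :=
  a ≠ b ∧ a ≠ c ∧ a ≠ d ∧ b ≠ c ∧ b ≠ d ∧ c ≠ d ∧
    G.Adj a b ∧ G.Adj b c ∧ G.Adj c d ∧ ¬G.Adj a c ∧ ¬G.Adj b d ∧ ¬G.Adj a d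

/-- Vertices `a b c d` form an induced cycle `a – b – c – d` on four vertices. -/
def IsInducedC4 {W : Type*} (G : SimpleGraph W) (a b c d : W) : Prop :=
  a ≠ b ∧ a ≠ c ∧ a ≠ d ∧ b ≠ c ∧ b ≠ d ∧ c ≠ d ∧
    G.Adj a b ∧ G.Adj b c ∧ G.Adj c d ∧ G.Adj d a ∧ ¬G.Adj a c ∧ ¬G.Adj b d

/-- A graph is quasi-threshold if it has no induced `P4` and no induced `C4`. -/
def IsQuasiThreshold {W : Type*} (G : SimpleGraph W) : Prop :=
  ∀ a b c d : W, ¬IsInducedP4 G a b c d ∧ ¬IsInducedC4 G a b c d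
open scoped Classical

/-- `u` is a strict ancestor of `w`: `u` is obtained from `w` by iterating the
parent assignment `p` at least once (and `u ≠ w`). -/
def StrictAnc {V : Type*} (p : V → V) (u w : V) : Prop :=
  u ≠ w ∧ ∃ k : ℕ, p^[k + 1] w = u

/-- `p` is the parent assignment of a rooted forest: iterating `p` from any
vertex reaches a root (a fixed point of `p`), so there are no cycles. -/
def IsRootedForest {V : Type*} (p : V → V) : Prop :=
  ∀ v : V, ∃ n : ℕ, p^[n + 1] v = p^[n] v

/-- The subtree of `u`: all vertices having `u` as ancestor-or-equal. -/
def subtree {V : Type*} (p : V → V) (u : V) : Set V :=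
  {w | u = w ∨ StrictAnc p u w}

/-- The children of `u` in the forest. -/
def children {V : Type*} (p : V → V) (u : V) : Set V :=
  {c | p c = u ∧ c ≠ u}

/- ===== Auxiliary lemmas ===== -/

section ForestLemmas

variable {V : Type*} {p : V → V}

lemma qt_fix (hp : IsRootedForest p) {w : V} {m : ℕ} (h : p^[m + 1] w = w) :
    p w = w := by
  obtain ⟨n, hn⟩ := hp w
  have hr : p (p^[n] w) = p^[n] w := by rwa [Function.iterate_succ_apply'] at hn
  have hper : ∀ t, p^[(m + 1) * t] w = w := by
    intro t
    induction t with
    | zero => simp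
    | succ t ih => rw [Nat.mul_succ, Function.iterate_add_apply, h, ih]
  have h1 : p^[(m + 1) * n] w = p^[n] w := by
    have he : (m + 1) * n = m * n + n := by ring
    rw [he, Function.iterate_add_apply]
    exact Function.iterate_fixed hr (m * n)
  have h2 : p^[n] w = w := by rw [← h1, hper n]
  rw [h2] at hr
  exact hr

lemma qt_antisym (hp : IsRootedForest p) {u w : V}
    (h1 : StrictAnc p u w) (h2 : StrictAnc p w u) : False := by
  obtain ⟨hne, k, hk⟩ := h1
  obtain ⟨-, j, hj⟩ := h2
  have hcyc : p^[(j + k + 1) + 1] w = w := by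
    have : j + k + 1 + 1 = (j + 1) + (k + 1) := by ring
    rw [this, Function.iterate_add_apply, hk, hj]
  have hf := qt_fix hp hcyc
  exact hne (by rw [← hk, Function.iterate_fixed hf])

lemma qt_trans (hp : IsRootedForest p) {u v w : V}
    (h1 : StrictAnc p u v) (h2 : StrictAnc p v w) : StrictAnc p u w := by
  obtain ⟨hne1, k, hk⟩ := h1
  obtain ⟨hne2, j, hj⟩ := h2
  have hiter : p^[(k + j + 1) + 1] w = u := by
    have : k + j + 1 + 1 = (k + 1) + (j + 1) := by ring
    rw [this, Function.iterate_add_apply, hj, hk]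
  refine ⟨?_, k + j + 1, hiter⟩
  intro he
  exact qt_antisym hp ⟨hne2, j, hj⟩ ⟨fun h' => hne2 h'.symm, k, he ▸ hk⟩

lemma qt_chain_aux {x u w : V} {k j : ℕ} (hk : p^[k + 1] x = u)
    (hj : p^[j + 1] x = w) (h : k ≤ j) : u = w ∨ ∃ t, p^[t + 1] u = w := by
  rcases Nat.eq_or_lt_of_le h with he | hlt
  · left; rw [← hk, ← hj, he]
  · right
    refine ⟨j - k - 1, ?_⟩
    have h2 : p^[(j - k - 1 + 1) + (k + 1)] x = w := by
      rw [show (j - k - 1 + 1) + (k + 1) = j + 1 by omega]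
      exact hj
    rw [Function.iterate_add_apply, hk] at h2
    exact h2

lemma qt_chain (hp : IsRootedForest p) {x u w : V}
    (h1 : StrictAnc p u x) (h2 : StrictAnc p w x) :
    u = w ∨ StrictAnc p u w ∨ StrictAnc p w u := by
  obtain ⟨hu, k, hk⟩ := h1
  obtain ⟨hw, j, hj⟩ := h2
  rcases le_total k j with h | h
  · rcases qt_chain_aux hk hj h with he | ⟨t, ht⟩
    · exact Or.inl he
    · by_cases hew : w = u
      · exact Or.inl hew.symm
      · exact Or.inr (Or.inr ⟨hew, t, ht⟩)
  · rcases qt_chain_aux hj hk h with he | ⟨t, ht⟩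
    · exact Or.inl he.symm
    · by_cases hew : u = w
      · exact Or.inl hew
      · exact Or.inr (Or.inl ⟨hew, t, ht⟩)

lemma qt_nofour (hp : IsRootedForest p) {a b c d : V}
    (hab : StrictAnc p a b ∨ StrictAnc p b a)
    (hbc : StrictAnc p b c ∨ StrictAnc p c b)
    (hcd : StrictAnc p c d ∨ StrictAnc p d c)
    (hac : a ≠ c) (hbd : b ≠ d)
    (nac : ¬(StrictAnc p a c ∨ StrictAnc p c a))
    (nbd : ¬(StrictAnc p b d ∨ StrictAnc p d b)) : False := by
  rcases hbc with h | h
  · rcases hcd with h' | h'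
    · exact nbd (Or.inl (qt_trans hp h h'))
    · rcases qt_chain hp h h' with e | e | e
      · exact hbd e
      · exact nbd (Or.inl e)
      · exact nbd (Or.inr e)
  · rcases hab with h' | h'
    · rcases qt_chain hp h' h with e | e | e
      · exact hac e
      · exact nac (Or.inl e)
      · exact nac (Or.inr e)
    · exact nac (Or.inr (qt_trans hp h h'))

end ForestLemmas

section QTConstruction

variable {V : Type*} [Fintype V] (G : SimpleGraph V) (f : V → ℕ)

/-- Closed neighborhood as a Finset. -/
noncomputable def qtN (u : V) : Finset V :=
  Finset.univ.filter fun x => x = u ∨ G.Adj u x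

@[simp] lemma mem_qtN {x u : V} : x ∈ qtN G u ↔ x = u ∨ G.Adj u x := by
  simp [qtN]

/-- Measure used to orient the ancestor relation. -/
noncomputable def qtMu (u : V) : ℕ :=
  (Fintype.card V - (qtN G u).card) * Fintype.card V + f u

/-- `u` is a strict ancestor of `w` in the intended forest. -/
def qtLt (u w : V) : Prop :=
  G.Adj u w ∧ (qtN G w ⊂ qtN G u ∨ (qtN G u = qtN G w ∧ f u < f w))

lemma qtLt_subset {u w : V} (h : qtLt G f u w) : qtN G w ⊆ qtN G u := by
  rcases h.2 with hs | ⟨he, -⟩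
  · exact subset_of_ssubset hs
  · exact he.ge

lemma qtLt_mu (hcard : ∀ v, f v < Fintype.card V) {u w : V} (h : qtLt G f u w) :
    qtMu G f u < qtMu G f w := by
  have ha : (qtN G u).card ≤ Fintype.card V := Finset.card_le_univ _
  rcases h.2 with hs | ⟨he, hf⟩
  · have hb : (qtN G w).card < (qtN G u).card := Finset.card_lt_card hs
    have h1 : Fintype.card V - (qtN G u).card + 1
        ≤ Fintype.card V - (qtN G w).card := by omega
    unfold qtMu
    calc (Fintype.card V - (qtN G u).card) * Fintype.card V + f u
        < (Fintype.card V - (qtN G u).card) * Fintype.card V + Fintype.card V := by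
          have := hcard u; omega
      _ = (Fintype.card V - (qtN G u).card + 1) * Fintype.card V := by ring
      _ ≤ (Fintype.card V - (qtN G w).card) * Fintype.card V :=
          Nat.mul_le_mul h1 le_rfl
      _ ≤ (Fintype.card V - (qtN G w).card) * Fintype.card V + f w :=
          Nat.le_add_right _ _
  · have hc : (qtN G u).card = (qtN G w).card := by rw [he]
    unfold qtMu
    rw [hc]
    omega

lemma qtLt_ne (hcard : ∀ v, f v < Fintype.card V) {u w : V} (h : qtLt G f u w) :
    u ≠ w :=
  fun he => absurd (qtLt_mu G f hcard h) (by rw [he]; exact lt_irrefl _)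

lemma qtLt_trans (hcard : ∀ v, f v < Fintype.card V) {u v w : V}
    (h1 : qtLt G f u v) (h2 : qtLt G f v w) : qtLt G f u w := by
  have hne : u ≠ w := by
    intro he
    have := lt_trans (qtLt_mu G f hcard h1) (qtLt_mu G f hcard h2)
    rw [he] at this
    exact lt_irrefl _ this
  have hsub : qtN G w ⊆ qtN G u :=
    (qtLt_subset G f h2).trans (qtLt_subset G f h1)
  have hadj : G.Adj u w := by
    have hw : w ∈ qtN G u := hsub (by simp)
    rcases (mem_qtN G).mp hw with he | ha
    · exact absurd he.symm hne
    · exact ha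
  refine ⟨hadj, ?_⟩
  rcases h1.2 with hs1 | ⟨he1, hf1⟩ <;> rcases h2.2 with hs2 | ⟨he2, hf2⟩
  · exact Or.inl (hs2.trans hs1)
  · exact Or.inl (by rw [← he2]; exact hs1)
  · exact Or.inl (by rw [he1]; exact hs2)
  · exact Or.inr ⟨he1.trans he2, hf1.trans hf2⟩

/-- Nestedness of closed neighborhoods along edges, from quasi-thresholdness. -/
lemma qt_nested (hQT : IsQuasiThreshold G) {u w : V} (h : G.Adj u w) :
    qtN G u ⊆ qtN G w ∨ qtN G w ⊆ qtN G u := by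
  by_contra hc
  push_neg at hc
  obtain ⟨h1, h2⟩ := hc
  obtain ⟨x, hxu, hxw⟩ := Finset.not_subset.mp h1
  obtain ⟨y, hyw, hyu⟩ := Finset.not_subset.mp h2
  rw [mem_qtN] at hxu hyw
  rw [mem_qtN] at hxw hyu
  push_neg at hxw hyu
  obtain ⟨hxw1, hxw2⟩ := hxw
  obtain ⟨hyu1, hyu2⟩ := hyu
  have hux : G.Adj u x := by
    rcases hxu with he | ha
    · exact absurd (he ▸ h.symm) hxw2
    · exact ha
  have hwy : G.Adj w y := by
    rcases hyw with he | ha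
    · exact absurd (he ▸ h) hyu2
    · exact ha
  have hxy : x ≠ y := by
    intro he
    exact hxw2 (he ▸ hwy)
  by_cases hadj : G.Adj x y
  · exact (hQT x u w y).2
      ⟨hux.ne', hxw1, hxy, h.ne, Ne.symm hyu1, hwy.ne,
        hux.symm, h, hwy, hadj.symm,
        fun hc' => hxw2 hc'.symm, hyu2⟩
  · exact (hQT x u w y).1
      ⟨hux.ne', hxw1, hxy, h.ne, Ne.symm hyu1, hwy.ne,
        hux.symm, h, hwy,
        fun hc' => hxw2 hc'.symm, hyu2, hadj⟩

lemma qt_total (hQT : IsQuasiThreshold G) (hI : Function.Injective f)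
    {u v : V} (hadj : G.Adj u v) : qtLt G f u v ∨ qtLt G f v u := by
  rcases qt_nested G hQT hadj with hs | hs
  · by_cases h2 : qtN G v ⊆ qtN G u
    · have he : qtN G u = qtN G v := subset_antisymm hs h2
      rcases lt_or_gt_of_ne (fun hc => hadj.ne (hI hc)) with hf | hf
      · exact Or.inl ⟨hadj, Or.inr ⟨he, hf⟩⟩
      · exact Or.inr ⟨hadj.symm, Or.inr ⟨he.symm, hf⟩⟩
    · exact Or.inr ⟨hadj.symm, Or.inl ⟨hs, h2⟩⟩
  · by_cases h2 : qtN G u ⊆ qtN G v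
    · have he : qtN G u = qtN G v := subset_antisymm h2 hs
      rcases lt_or_gt_of_ne (fun hc => hadj.ne (hI hc)) with hf | hf
      · exact Or.inl ⟨hadj, Or.inr ⟨he, hf⟩⟩
      · exact Or.inr ⟨hadj.symm, Or.inr ⟨he.symm, hf⟩⟩
    · exact Or.inl ⟨hadj, Or.inl ⟨hs, h2⟩⟩

/-- Strict ancestors of `w`. -/
noncomputable def qtA (w : V) : Finset V :=
  Finset.univ.filter fun u => qtLt G f u w

@[simp] lemma mem_qtA {u w : V} : u ∈ qtA G f w ↔ qtLt G f u w := by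
  simp [qtA]

/-- The parent: a `qtMu`-maximal strict ancestor, or the vertex itself. -/
noncomputable def qtP (w : V) : V :=
  if h : (qtA G f w).Nonempty then
    (Finset.exists_max_image (qtA G f w) (qtMu G f) h).choose
  else w

lemma qtP_spec {w : V} (h : (qtA G f w).Nonempty) :
    qtP G f w ∈ qtA G f w ∧
      ∀ u ∈ qtA G f w, qtMu G f u ≤ qtMu G f (qtP G f w) := by
  rw [qtP, dif_pos h]
  exact (Finset.exists_max_image (qtA G f w) (qtMu G f) h).choose_spec

lemma qtP_of_empty {w : V} (h : ¬(qtA G f w).Nonempty) : qtP G f w = w := by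
  rw [qtP, dif_neg h]

lemma qtP_lt {w : V} (h : (qtA G f w).Nonempty) : qtLt G f (qtP G f w) w :=
  (mem_qtA G f).mp (qtP_spec G f h).1

lemma qt_chainA (hQT : IsQuasiThreshold G) (hI : Function.Injective f)
    {u v w : V} (h1 : qtLt G f u w) (h2 : qtLt G f v w) (hne : u ≠ v) :
    qtLt G f u v ∨ qtLt G f v u := by
  have hv : v ∈ qtN G u := qtLt_subset G f h1 (by simp [h2.1.symm.ne, h2.1.symm])
  have hadj : G.Adj u v := by
    rcases (mem_qtN G).mp hv with he | ha
    · exact absurd he.symm hne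
    · exact ha
  exact qt_total G f hQT hI hadj

lemma qtP_max (hQT : IsQuasiThreshold G) (hI : Function.Injective f)
    (hcard : ∀ v, f v < Fintype.card V) {u w : V}
    (hu : qtLt G f u w) (hne : u ≠ qtP G f w) : qtLt G f u (qtP G f w) := by
  have hA : (qtA G f w).Nonempty := ⟨u, (mem_qtA G f).mpr hu⟩
  obtain ⟨hm, hmax⟩ := qtP_spec G f hA
  rcases qt_chainA G f hQT hI hu ((mem_qtA G f).mp hm) hne with h | h
  · exact h
  · exact absurd (qtLt_mu G f hcard h)
      (not_lt.mpr (hmax u ((mem_qtA G f).mpr hu)))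

lemma qt_card_lt (hcard : ∀ v, f v < Fintype.card V) {w : V}
    (h : (qtA G f w).Nonempty) :
    (qtA G f (qtP G f w)).card < (qtA G f w).card := by
  apply Finset.card_lt_card
  have hsub : qtA G f (qtP G f w) ⊆ qtA G f w := by
    intro u hu
    rw [mem_qtA] at hu ⊢
    exact qtLt_trans G f hcard hu (qtP_lt G f h)
  rw [Finset.ssubset_iff_of_subset hsub]
  refine ⟨qtP G f w, (qtP_spec G f h).1, ?_⟩
  rw [mem_qtA]
  intro hc
  exact absurd (qtLt_mu G f hcard hc) (lt_irrefl _)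

lemma qt_forest (hcard : ∀ v, f v < Fintype.card V) :
    IsRootedForest (qtP G f) := by
  suffices H : ∀ n (w : V), (qtA G f w).card ≤ n →
      ∃ m : ℕ, (qtP G f)^[m + 1] w = (qtP G f)^[m] w by
    intro w
    exact H _ w le_rfl
  intro n
  induction n with
  | zero =>
    intro w hw
    have h : ¬(qtA G f w).Nonempty := by
      rw [Finset.nonempty_iff_ne_empty]
      simp only [ne_eq, not_not]
      exact Finset.card_eq_zero.mp (Nat.le_zero.mp hw)
    exact ⟨0, by simpa using qtP_of_empty G f h⟩
  | succ n ih =>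
    intro w hw
    by_cases h : (qtA G f w).Nonempty
    · have hlt := qt_card_lt G f hcard h
      obtain ⟨m, hm⟩ := ih (qtP G f w) (by omega)
      exact ⟨m + 1, by
        rw [Function.iterate_succ_apply, Function.iterate_succ_apply]
        exact hm⟩
    · exact ⟨0, by simpa using qtP_of_empty G f h⟩

lemma qt_lt_of_iter (hcard : ∀ v, f v < Fintype.card V) :
    ∀ (k : ℕ) {w u : V}, (qtP G f)^[k + 1] w = u → u ≠ w → qtLt G f u w := by
  intro k
  induction k with
  | zero =>
    intro w u h hne
    have h' : qtP G f w = u := h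
    by_cases hA : (qtA G f w).Nonempty
    · exact h' ▸ qtP_lt G f hA
    · exact absurd (h' ▸ qtP_of_empty G f hA) hne
  | succ k ih =>
    intro w u h hne
    by_cases hw : qtP G f w = w
    · exact absurd ((Function.iterate_fixed hw (k + 2)) ▸ h.symm) hne
    · have hA : (qtA G f w).Nonempty := by
        by_contra hc
        exact hw (qtP_of_empty G f hc)
      have h1 : qtLt G f (qtP G f w) w := qtP_lt G f hA
      have h2 : (qtP G f)^[k + 1] (qtP G f w) = u := by
        rw [← Function.iterate_succ_apply]
        exact h
      by_cases hu : u = qtP G f w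
      · exact hu ▸ h1
      · exact qtLt_trans G f hcard (ih h2 hu) h1

lemma qt_iter_of_lt (hQT : IsQuasiThreshold G) (hI : Function.Injective f)
    (hcard : ∀ v, f v < Fintype.card V) :
    ∀ (n : ℕ) {w u : V}, (qtA G f w).card ≤ n → qtLt G f u w →
      ∃ k : ℕ, (qtP G f)^[k + 1] w = u := by
  intro n
  induction n with
  | zero =>
    intro w u hn hlt
    exact absurd (Finset.card_pos.mpr ⟨u, (mem_qtA G f).mpr hlt⟩)
      (by omega)
  | succ n ih =>
    intro w u hn hlt
    have hA : (qtA G f w).Nonempty := ⟨u, (mem_qtA G f).mpr hlt⟩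
    by_cases he : u = qtP G f w
    · exact ⟨0, by simp [he]⟩
    · have hmax := qtP_max G f hQT hI hcard hlt he
      have hcl := qt_card_lt G f hcard hA
      obtain ⟨k, hk⟩ := ih (by omega) hmax
      exact ⟨k + 1, by rw [Function.iterate_succ_apply]; exact hk⟩

lemma qt_anc_iff (hQT : IsQuasiThreshold G) (hI : Function.Injective f)
    (hcard : ∀ v, f v < Fintype.card V) {u w : V} :
    StrictAnc (qtP G f) u w ↔ qtLt G f u w := by
  constructor
  · rintro ⟨hne, k, hk⟩
    exact qt_lt_of_iter G f hcard k hk hne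
  · intro h
    refine ⟨qtLt_ne G f hcard h, ?_⟩
    exact qt_iter_of_lt G f hQT hI hcard (qtA G f w).card le_rfl h

end QTConstruction

/-- A finite simple graph is quasi-threshold iff it is the
transitive closure of a rooted forest: there is a parent assignment `p`
(iterating which always reaches a root) such that two vertices are adjacent
exactly when one is a strict ancestor of the other. -/
theorem quasiThreshold_iff_exists_forest {V : Type*} [Fintype V] (G : SimpleGraph V) :
    IsQuasiThreshold G ↔
      ∃ p : V → V, IsRootedForest p ∧
        ∀ u w : V, G.Adj u w ↔ (StrictAnc p u w ∨ StrictAnc p w u) := by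
  constructor
  · intro hQT
    set f : V → ℕ := fun v => (Fintype.equivFin V v : ℕ) with hf
    have hI : Function.Injective f :=
      fun a b h => (Fintype.equivFin V).injective (Fin.val_injective h)
    have hcard : ∀ v, f v < Fintype.card V := fun v => (Fintype.equivFin V v).isLt
    refine ⟨qtP G f, qt_forest G f hcard, fun u w => ?_⟩
    rw [qt_anc_iff G f hQT hI hcard, qt_anc_iff G f hQT hI hcard]
    constructor
    · intro h
      exact qt_total G f hQT hI h
    · rintro (h | h)
      · exact h.1
      · exact h.1.symm
  · rintro ⟨p, hp, hadj⟩
    intro a b c d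
    constructor
    · rintro ⟨h1, h2, h3, h4, h5, h6, e1, e2, e3, n1, n2, n3⟩
      exact qt_nofour hp ((hadj a b).mp e1) ((hadj b c).mp e2) ((hadj c d).mp e3)
        h2 h5 (fun hc => n1 ((hadj a c).mpr hc)) (fun hc => n2 ((hadj b d).mpr hc))
    · rintro ⟨h1, h2, h3, h4, h5, h6, e1, e2, e3, e4, n1, n2⟩
      exact qt_nofour hp ((hadj a b).mp e1) ((hadj b c).mp e2) ((hadj c d).mp e3)
        h2 h5 (fun hc => n1 ((hadj a c).mpr hc)) (fun hc => n2 ((hadj b d).mpr hc))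
end

section
/- Let G be a finite simple graph in which vertices a, b, c, d form an induced P4 a–b–c–d, and let G' be any quasi-threshold graph on the same vertex set. Then there exists a pair of vertices {x,y} ⊆ {a,b,c,d} with {x,y} ∩ {b,c} ≠ ∅ such that {x,y} is an edge of exactly one of G and G' (i.e., an edit within {a,b,c,d} incident to a central node b or c is required). -/
/-- If `a–b–c–d` is an induced `P4` in `G` and `G'` is any
quasi-threshold graph on the same vertex set, then some pair of vertices
within `{a, b, c, d}` that meets the central nodes `{b, c}` is an edge of
exactly one of `G` and `G'`. -/
theorem P4_requires_central_edit {V : Type*} [Fintype V] (G G' : SimpleGraph V)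
    (a b c d : V) (h : IsInducedP4 G a b c d) (hG' : IsQuasiThreshold G') :
    ∃ x y : V, x ≠ y ∧
      x ∈ ({a, b, c, d} : Set V) ∧ y ∈ ({a, b, c, d} : Set V) ∧
      (x ∈ ({b, c} : Set V) ∨ y ∈ ({b, c} : Set V)) ∧
      (G.Adj x y ↔ ¬G'.Adj x y) := by

  obtain ⟨hab, hac, had, hbc, hbd, hcd, gab, gbc, gcd, gnac, gnbd, gnad⟩ := h
  by_contra hcon
  push_neg at hcon
  have agree : ∀ x y : V, x ≠ y → x ∈ ({a, b, c, d} : Set V) →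
      y ∈ ({a, b, c, d} : Set V) → (x ∈ ({b, c} : Set V) ∨ y ∈ ({b, c} : Set V)) →
      (G.Adj x y ↔ G'.Adj x y) := by
    intro x y h1 h2 h3 h4
    have := hcon x y h1 h2 h3 h4
    tauto
  have mem : ∀ x : V, x ∈ ({a, b, c, d} : Set V) ∨ x ∈ ({b, c} : Set V) → True := fun _ _ => trivial
  have ha : a ∈ ({a, b, c, d} : Set V) := by simp
  have hb : b ∈ ({a, b, c, d} : Set V) := by simp
  have hc : c ∈ ({a, b, c, d} : Set V) := by simp
  have hd : d ∈ ({a, b, c, d} : Set V) := by simp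
  have hbm : b ∈ ({b, c} : Set V) := by simp
  have hcm : c ∈ ({b, c} : Set V) := by simp
  have e1 : G'.Adj a b := (agree a b hab ha hb (Or.inr hbm)).mp gab
  have e2 : G'.Adj b c := (agree b c hbc hb hc (Or.inl hbm)).mp gbc
  have e3 : G'.Adj c d := (agree c d hcd hc hd (Or.inl hcm)).mp gcd
  have e4 : ¬G'.Adj a c := fun hx => gnac ((agree a c hac ha hc (Or.inr hcm)).mpr hx)
  have e5 : ¬G'.Adj b d := fun hx => gnbd ((agree b d hbd hb hd (Or.inl hbm)).mpr hx)
  obtain ⟨hp4, hc4⟩ := hG' a b c d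
  by_cases e6 : G'.Adj d a
  · exact hc4 ⟨hab, hac, had, hbc, hbd, hcd, e1, e2, e3, e6, e4, e5⟩
  · exact hp4 ⟨hab, hac, had, hbc, hbd, hcd, e1, e2, e3, e4, e5, fun hx => e6 hx.symm⟩
end

section
/- Let G be a finite simple graph in which vertices a, b, c, d form an induced C4 a–b–c–d (so b and c are adjacent), and let G' be any quasi-threshold graph on the same vertex set. Then there exists a pair of vertices {x,y} ⊆ {a,b,c,d} with {x,y} ∩ {b,c} ≠ ∅ such that {x,y} is an edge of exactly one of G and G' (i.e., an edit within {a,b,c,d} incident to b or c is required). -/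
/-- If `a–b–c–d` is an induced `C4` in `G` (so `b` and `c` are adjacent) and `G'` is any
quasi-threshold graph on the same vertex set, then some pair of vertices
within `{a, b, c, d}` that meets `{b, c}` is an edge of
exactly one of `G` and `G'`. -/
theorem C4_requires_central_edit {V : Type*} [Fintype V] (G G' : SimpleGraph V)
    (a b c d : V) (h : IsInducedC4 G a b c d) (hG' : IsQuasiThreshold G') :
    ∃ x y : V, x ≠ y ∧
      x ∈ ({a, b, c, d} : Set V) ∧ y ∈ ({a, b, c, d} : Set V) ∧
      (x ∈ ({b, c} : Set V) ∨ y ∈ ({b, c} : Set V)) ∧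
      (G.Adj x y ↔ ¬G'.Adj x y) := by
  obtain ⟨hab, hac, had, hbc, hbd, hcd, Gab, Gbc, Gcd, Gda, Gac, Gbd⟩ := h
  by_contra hcon
  push_neg at hcon
  have key : ∀ x y : V, x ≠ y →
      x ∈ ({a, b, c, d} : Set V) → y ∈ ({a, b, c, d} : Set V) →
      (x ∈ ({b, c} : Set V) ∨ y ∈ ({b, c} : Set V)) →
      (G.Adj x y ↔ G'.Adj x y) := by
    intro x y h1 h2 h3 h4
    have := hcon x y h1 h2 h3 h4
    tauto
  have mb : b ∈ ({b, c} : Set V) := by simp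
  have mc : c ∈ ({b, c} : Set V) := by simp
  have sa : a ∈ ({a, b, c, d} : Set V) := by simp
  have sb : b ∈ ({a, b, c, d} : Set V) := by simp
  have sc : c ∈ ({a, b, c, d} : Set V) := by simp
  have sd : d ∈ ({a, b, c, d} : Set V) := by simp
  have G'ab : G'.Adj a b := (key a b hab sa sb (Or.inr mb)).mp Gab
  have G'bc : G'.Adj b c := (key b c hbc sb sc (Or.inl mb)).mp Gbc
  have G'cd : G'.Adj c d := (key c d hcd sc sd (Or.inl mc)).mp Gcd
  have G'ac : ¬G'.Adj a c := fun q => Gac ((key a c hac sa sc (Or.inr mc)).mpr q)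
  have G'bd : ¬G'.Adj b d := fun q => Gbd ((key b d hbd sb sd (Or.inl mb)).mpr q)
  by_cases G'ad : G'.Adj a d
  · exact (hG' a b c d).2 ⟨hab, hac, had, hbc, hbd, hcd, G'ab, G'bc, G'cd, G'ad.symm, G'ac, G'bd⟩
  · exact (hG' a b c d).1 ⟨hab, hac, had, hbc, hbd, hcd, G'ab, G'bc, G'cd, G'ac, G'bd, G'ad⟩
end

section
/- Let G be a finite simple graph and suppose H_1, …, H_k are 4-element vertex sets such that each H_i forms an induced P4 or an induced C4 in G with a designated pair {B_i, C_i} ⊆ H_i (the central nodes in the P4 case, a pair of adjacent vertices of the cycle in the C4 case), and such that for all i < j the set H_j is disjoint from {B_i, C_i}. Then every quasi-threshold graph G' on the same vertex set differs from G in at least k vertex pairs; i.e., k is a lower bound on the quasi-threshold edit distance of G. -/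
lemma key_edit {V : Type*} (G G' : SimpleGraph V) (hG' : IsQuasiThreshold G')
    (a b c d : V) (h : IsInducedP4 G a b c d ∨ IsInducedC4 G a b c d) :
    ∃ x y : V, s(x, y) ∈ symmDiff G.edgeSet G'.edgeSet ∧ (x = b ∨ x = c) ∧
      (y = a ∨ y = b ∨ y = c ∨ y = d) := by
  by_contra hcon
  push_neg at hcon
  have agree : ∀ x y : V, (x = b ∨ x = c) → (y = a ∨ y = b ∨ y = c ∨ y = d) →
      (G.Adj x y ↔ G'.Adj x y) := by
    intro x y hx hy
    have hmem : s(x, y) ∉ symmDiff G.edgeSet G'.edgeSet := by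
      intro hm
      have := hcon x y hm hx
      tauto
    rw [Set.mem_symmDiff] at hmem
    simp only [SimpleGraph.mem_edgeSet] at hmem
    tauto
  rcases h with ⟨hab, hac, had, hbc, hbd, hcd, Gab, Gbc, Gcd, Gac, Gbd, _⟩ |
    ⟨hab, hac, had, hbc, hbd, hcd, Gab, Gbc, Gcd, _, Gac, Gbd⟩ <;>
  · have h1 : G'.Adj a b := ((agree b a (Or.inl rfl) (Or.inl rfl)).mp Gab.symm).symm
    have h2 : G'.Adj b c := (agree b c (Or.inl rfl) (by tauto)).mp Gbc
    have h3 : G'.Adj c d := (agree c d (Or.inr rfl) (by tauto)).mp Gcd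
    have h4 : ¬G'.Adj a c := fun h => Gac ((agree c a (Or.inr rfl) (Or.inl rfl)).mpr h.symm).symm
    have h5 : ¬G'.Adj b d := fun h => Gbd ((agree b d (Or.inl rfl) (by tauto)).mpr h)
    by_cases h6 : G'.Adj a d
    · exact (hG' a b c d).2 ⟨hab, hac, had, hbc, hbd, hcd, h1, h2, h3, h6.symm, h4, h5⟩
    · exact (hG' a b c d).1 ⟨hab, hac, had, hbc, hbd, hcd, h1, h2, h3, h4, h5, h6⟩

/-- Suppose `H i = {a i, b i, c i, d i}` (for `i : Fin k`) are
vertex sets each forming an induced `P4` or `C4` in `G` with designated pair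
`{b i, c i}` (the central nodes in the `P4` case, an adjacent pair of the
cycle in the `C4` case), such that for `i < j` the set `H j` is disjoint from
`{b i, c i}`. Then every quasi-threshold graph `G'` on the same vertex set
differs from `G` in at least `k` vertex pairs, i.e. `k` is a lower bound on
the quasi-threshold edit distance. -/
theorem packing_lower_bound {V : Type*} [Fintype V] (G : SimpleGraph V) (k : ℕ)
    (a b c d : Fin k → V)
    (hind : ∀ i : Fin k,
      IsInducedP4 G (a i) (b i) (c i) (d i) ∨ IsInducedC4 G (a i) (b i) (c i) (d i))
    (hdisj : ∀ i j : Fin k, i < j →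
      ({a j, b j, c j, d j} : Set V) ∩ ({b i, c i} : Set V) = ∅)
    (G' : SimpleGraph V) (hG' : IsQuasiThreshold G') :
    k ≤ (symmDiff G.edgeSet G'.edgeSet).ncard := by
  classical
  set S := symmDiff G.edgeSet G'.edgeSet with hS
  choose x y hmem hx hy using fun i => key_edit G G' hG' (a i) (b i) (c i) (d i) (hind i)
  have hinj : Function.Injective (fun i => (s(x i, y i) : Sym2 V)) := by
    intro i j hij
    by_contra hne
    simp only at hij
    rcases lt_or_gt_of_ne hne with hlt | hlt
    · have hd := hdisj i j hlt
      have hxj : x i = x j ∨ x i = y j := by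
        have : x i ∈ (s(x j, y j) : Sym2 V) := hij ▸ Sym2.mem_mk_left _ _
        simpa [Sym2.mem_iff] using this
      have h1 : x i ∈ ({a j, b j, c j, d j} : Set V) := by
        rcases hxj with h | h <;> rcases hx j with h' | h' <;> rcases hy j with h' | h' | h' | h' <;>
          simp_all [Set.mem_insert_iff]
      have h2 : x i ∈ ({b i, c i} : Set V) := by
        rcases hx i with h | h <;> simp_all [Set.mem_insert_iff]
      have : x i ∈ ({a j, b j, c j, d j} : Set V) ∩ ({b i, c i} : Set V) := ⟨h1, h2⟩
      rw [hd] at this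
      exact this
    · have hd := hdisj j i hlt
      have hxj : x j = x i ∨ x j = y i := by
        have : x j ∈ (s(x i, y i) : Sym2 V) := hij ▸ Sym2.mem_mk_left _ _
        simpa [Sym2.mem_iff] using this
      have h1 : x j ∈ ({a i, b i, c i, d i} : Set V) := by
        rcases hxj with h | h <;> rcases hx i with h' | h' <;> rcases hy i with h' | h' | h' | h' <;>
          simp_all [Set.mem_insert_iff]
      have h2 : x j ∈ ({b j, c j} : Set V) := by
        rcases hx j with h | h <;> simp_all [Set.mem_insert_iff]
      have : x j ∈ ({a i, b i, c i, d i} : Set V) ∩ ({b j, c j} : Set V) := ⟨h1, h2⟩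
      rw [hd] at this
      exact this
  have hfin : S.Finite := Set.toFinite S
  have hg : Function.Injective (fun i : Fin k => (⟨s(x i, y i), hmem i⟩ : S)) := by
    intro i j h
    exact hinj (Subtype.mk_eq_mk.mp h)
  have := Nat.card_le_card_of_injective _ hg
  rw [← Nat.card_coe_set_eq]
  simpa using this
end

section
/- Fix a rooted forest T on a finite vertex set V and a set N ⊆ V. For every vertex u and every set C of children of u, the edit cost satisfies cost(u, C) = cost(u, ∅) − Σ_{c ∈ C} cc(c), where cc(c) = |subtree(c) ∩ N| − |subtree(c) \ N| is the child closeness of c. -/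
open scoped Classical

/-- Child closeness of `w` w.r.t. the neighbour set `N`:
`|subtree(w) ∩ N| − |subtree(w) \ N|`. -/
noncomputable def cc {V : Type*} (p : V → V) (N : Set V) (w : V) : ℤ :=
  ((subtree p w ∩ N).ncard : ℤ) - ((subtree p w \ N).ncard : ℤ)

/-- `S(u, C)`: the union of `{u}`, the strict ancestors of `u`, and the
subtrees of the children in `C`. -/
def editSet {V : Type*} (p : V → V) (u : V) (C : Set V) : Set V :=
  insert u ({x | StrictAnc p x u} ∪ ⋃ c ∈ C, subtree p c)

/-- The edit cost `cost(u, C) = |S(u,C) \ N| + |N \ S(u,C)|`. -/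
noncomputable def cost {V : Type*} (p : V → V) (N : Set V) (u : V) (C : Set V) : ℕ :=
  (editSet p u C \ N).ncard + (N \ editSet p u C).ncard

/-! ### Auxiliary lemmas -/

lemma mem_subtree_iff {V : Type*} (p : V → V) (c w : V) :
    w ∈ subtree p c ↔ ∃ k, p^[k] w = c := by
  constructor
  · rintro (rfl | ⟨hne, k, hk⟩)
    · exact ⟨0, rfl⟩
    · exact ⟨k + 1, hk⟩
  · rintro ⟨k, hk⟩
    by_cases h : c = w
    · exact Or.inl h
    · cases k with
      | zero => exact absurd hk.symm h
      | succ k => exact Or.inr ⟨h, k, hk⟩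

lemma mem_editSet_empty_iff {V : Type*} (p : V → V) (u x : V) :
    x ∈ editSet p u (∅ : Set V) ↔ ∃ k, p^[k] u = x := by
  simp only [editSet, Set.mem_insert_iff, Set.mem_union, Set.mem_setOf_eq,
    Set.mem_empty_iff_false, Set.iUnion_of_empty, Set.iUnion_empty, or_false]
  constructor
  · rintro (rfl | ⟨hne, k, hk⟩)
    · exact ⟨0, rfl⟩
    · exact ⟨k + 1, hk⟩
  · rintro ⟨k, hk⟩
    by_cases h : x = u
    · exact Or.inl h
    · cases k with
      | zero => exact absurd hk.symm h
      | succ k => exact Or.inr ⟨h, k, hk⟩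

lemma eventually_const {V : Type*} (p : V → V) (u : V) (n : ℕ)
    (hn : p^[n + 1] u = p^[n] u) : ∀ j, p^[n + j] u = p^[n] u := by
  intro j
  induction j with
  | zero => rfl
  | succ j ih =>
      have h1 : n + (j + 1) = (n + j) + 1 := by ring
      rw [h1, Function.iterate_succ_apply', ih,
        ← Function.iterate_succ_apply' p n u, hn]

lemma periodic_mul {V : Type*} (p : V → V) (u : V) (q : ℕ) (hq : p^[q] u = u) :
    ∀ t, p^[q * t] u = u := by
  intro t
  induction t with
  | zero => rfl
  | succ t ih =>
      rw [Nat.mul_succ, Function.iterate_add_apply, hq, ih]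

lemma fixed_of_periodic {V : Type*} (p : V → V) (hp : IsRootedForest p) (u : V)
    (q : ℕ) (hq : p^[q + 1] u = u) : p u = u := by
  obtain ⟨n, hn⟩ := hp u
  have hmul := periodic_mul p u (q + 1) hq (n + 1)
  have hge : (q + 1) * (n + 1) ≥ n := by nlinarith
  obtain ⟨j, hj⟩ := Nat.exists_eq_add_of_le hge
  have h1 : p^[(q + 1) * (n + 1)] u = p^[n] u := by
    rw [hj]; exact eventually_const p u n hn j
  have h2 : p^[n] u = u := by rw [← h1, hmul]
  have := hn
  rw [h2] at this
  rwa [Function.iterate_succ_apply', h2] at this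

/-- Key disjointness: the subtree of a child of `u` meets no vertex in the
orbit of `u`. -/
lemma subtree_child_orbit_disjoint {V : Type*} (p : V → V) (hp : IsRootedForest p)
    {u c w : V} (hc : c ∈ children p u) (hw : w ∈ subtree p c)
    {m : ℕ} (hm : p^[m] u = w) : False := by
  obtain ⟨hpc, hcu⟩ := hc
  obtain ⟨k, hk⟩ := (mem_subtree_iff p c w).mp hw
  have hper : p^[m + k + 1] u = u := by
    have : p^[k + 1] w = u := by
      rw [Function.iterate_succ_apply', hk, hpc]
    calc p^[m + k + 1] u = p^[k + 1] (p^[m] u) := by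
          rw [← Function.iterate_add_apply]; ring_nf
      _ = u := by rw [hm, this]
  have hfix : p u = u := fixed_of_periodic p hp u (m + k) hper
  have hwu : w = u := by rw [← hm, Function.iterate_fixed hfix]
  exact hcu (by rw [← hk, hwu, Function.iterate_fixed hfix])

lemma subtree_disjoint_editSet {V : Type*} (p : V → V) (hp : IsRootedForest p)
    {u c : V} (hc : c ∈ children p u) (C : Set V) (hC : C ⊆ children p u)
    (hcC : c ∉ C) : Disjoint (subtree p c) (editSet p u C) := by
  rw [Set.disjoint_left]
  intro w hwc hwE
  simp only [editSet, Set.mem_insert_iff, Set.mem_union, Set.mem_setOf_eq,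
    Set.mem_iUnion, exists_prop] at hwE
  have hwA : ∀ m : ℕ, p^[m] u = w → False := fun m hm =>
    subtree_child_orbit_disjoint p hp hc hwc hm
  rcases hwE with rfl | h | ⟨c', hc'C, hwc'⟩
  · exact hwA 0 rfl
  · obtain ⟨_, m, hm⟩ := h
    exact hwA (m + 1) hm
  · -- w is in subtrees of two distinct children c and c'
    have hcc' : c ≠ c' := fun h => hcC (h ▸ hc'C)
    obtain ⟨k, hk⟩ := (mem_subtree_iff p c w).mp hwc
    obtain ⟨k', hk'⟩ := (mem_subtree_iff p c' w).mp hwc'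
    rcases le_total k k' with hle | hle
    · obtain ⟨j, rfl⟩ := Nat.exists_eq_add_of_le hle
      have hj : p^[j] c = c' := by
        rw [← hk, ← Function.iterate_add_apply, Nat.add_comm j k, hk']
      cases j with
      | zero => exact hcc' hj
      | succ j =>
          have : p^[j] u = c' := by
            rw [← hj, Function.iterate_succ_apply, hc.1]
          exact subtree_child_orbit_disjoint p hp (hC hc'C)
            ((mem_subtree_iff p c' c').mpr ⟨0, rfl⟩) this
    · obtain ⟨j, rfl⟩ := Nat.exists_eq_add_of_le hle
      have hj : p^[j] c' = c := by
        rw [← hk', ← Function.iterate_add_apply, Nat.add_comm j k', hk]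
      cases j with
      | zero => exact hcc' hj.symm
      | succ j =>
          have : p^[j] u = c := by
            rw [← hj, Function.iterate_succ_apply, (hC hc'C).1]
          exact subtree_child_orbit_disjoint p hp hc
            ((mem_subtree_iff p c c).mpr ⟨0, rfl⟩) this

lemma editSet_insert {V : Type*} (p : V → V) (u c : V) (C : Set V) :
    editSet p u (insert c C) = subtree p c ∪ editSet p u C := by
  ext x
  simp only [editSet, Set.mem_insert_iff, Set.mem_union, Set.mem_setOf_eq,
    Set.mem_iUnion, exists_prop]
  constructor
  · rintro (rfl | h | ⟨c', (rfl | hc'), hx⟩)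
    · exact Or.inr (Or.inl rfl)
    · exact Or.inr (Or.inr (Or.inl h))
    · exact Or.inl hx
    · exact Or.inr (Or.inr (Or.inr ⟨c', hc', hx⟩))
  · rintro (hx | rfl | h | ⟨c', hc', hx⟩)
    · exact Or.inr (Or.inr ⟨c, Or.inl rfl, hx⟩)
    · exact Or.inl rfl
    · exact Or.inr (Or.inl h)
    · exact Or.inr (Or.inr ⟨c', Or.inr hc', hx⟩)

lemma cost_union_disjoint {V : Type*} [Fintype V] (T S N : Set V)
    (hd : Disjoint T S) :
    (((T ∪ S) \ N).ncard : ℤ) + ((N \ (T ∪ S)).ncard : ℤ)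
      = ((S \ N).ncard : ℤ) + ((N \ S).ncard : ℤ)
        - (((T ∩ N).ncard : ℤ) - ((T \ N).ncard : ℤ)) := by
  have h1 : ((T ∪ S) \ N) = (T \ N) ∪ (S \ N) := Set.union_diff_distrib
  have hd1 : Disjoint (T \ N) (S \ N) :=
    hd.mono Set.diff_subset Set.diff_subset
  have e1 : ((T ∪ S) \ N).ncard = (T \ N).ncard + (S \ N).ncard := by
    rw [h1, Set.ncard_union_eq hd1]
  have h2 : N \ (T ∪ S) = (N \ S) \ T := by
    ext x; simp only [Set.mem_diff, Set.mem_union]; tauto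
  have h3 : (N \ S) ∩ T = T ∩ N := by
    ext x
    simp only [Set.mem_inter_iff, Set.mem_diff]
    constructor
    · rintro ⟨⟨hN, _⟩, hT⟩; exact ⟨hT, hN⟩
    · rintro ⟨hT, hN⟩
      exact ⟨⟨hN, fun hS => (Set.disjoint_left.mp hd hT) hS⟩, hT⟩
  have e2 : ((N \ S) ∩ T).ncard + ((N \ S) \ T).ncard = (N \ S).ncard :=
    Set.ncard_inter_add_ncard_diff_eq_ncard (N \ S) T
  rw [e1, h2, h3] at *
  push_cast
  omega

/-- For every vertex `u` and every set `C` of children of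
`u`, the edit cost satisfies
`cost(u, C) = cost(u, ∅) − Σ_{c ∈ C} cc(c)`. -/
theorem cost_eq_cost_empty_sub_sum_cc {V : Type*} [Fintype V] [DecidableEq V]
    (p : V → V) (hp : IsRootedForest p) (N : Set V) (u : V)
    (C : Finset V) (hC : ↑C ⊆ children p u) :
    (cost p N u ↑C : ℤ) = (cost p N u ∅ : ℤ) - ∑ c ∈ C, cc p N c := by
  induction C using Finset.induction_on with
  | empty => simp
  | @insert c C hcC ih =>
      have hCsub : (↑C : Set V) ⊆ children p u := by
        refine Set.Subset.trans ?_ hC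
        exact_mod_cast Finset.coe_subset.mpr (Finset.subset_insert c C)
      have hc : c ∈ children p u := hC (by simp)
      have hd : Disjoint (subtree p c) (editSet p u ↑C) :=
        subtree_disjoint_editSet p hp hc ↑C hCsub (by exact_mod_cast hcC)
      have hE : editSet p u ↑(insert c C) = subtree p c ∪ editSet p u ↑C := by
        rw [Finset.coe_insert, editSet_insert]
      have key := cost_union_disjoint (subtree p c) (editSet p u ↑C) N hd
      have ih' := ih hCsub
      have key' : (cost p N u ↑(insert c C) : ℤ) = (cost p N u ↑C : ℤ) - cc p N c := by
        simp only [cost, hE, cc]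
        push_cast
        linarith [key]
      rw [Finset.sum_insert hcC, key', ih']
      ring
end
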